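/- Binding-time correctness for IKC extended with natural number literals and multiplication: for every closed term · ⊢ f : Nat ⟶ □Nat of IKC^Nat and any two closed terms · ⊢ u₁, u₂ : Nat, it holds that app(f, u₁) ≈ app(f, u₂) in the equational theory of IKC^Nat. -/

import Mathlib

namespace IKC

/-- Types of IKC^Nat: base type ι, functions, box, natural numbers. -/
inductive Ty : Type
  | base : Ty
  | arr : Ty → Ty → Ty
  | box : Ty → Ty
  | nat : Ty

/-- Typing contexts: empty, extension by a type, extension by a lock 🔒. -/
inductive Cx : Type
  | nil : Cx
  | snoc : Cx → Ty → Cx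
  | lock : Cx → Cx

/-- IKC modal accessibility relation Δ ◁ Γ: Γ = Δ,🔒,Δ' with Δ' lock-free. -/
inductive Ext : Cx → Cx → Type
  | nil : Ext Γ (.lock Γ)
  | var : Ext Δ Γ → Ext Δ (.snoc Γ A)

/-- Order-preserving embeddings Γ ≤ Γ'. -/
inductive Ope : Cx → Cx → Type
  | base : Ope .nil .nil
  | drop : Ope Γ Γ' → Ope Γ (.snoc Γ' A)
  | keep : Ope Γ Γ' → Ope (.snoc Γ A) (.snoc Γ' A)
  | keepLock : Ope Γ Γ' → Ope (.lock Γ) (.lock Γ')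

/-- Identity OPE. -/
def idOpe : (Γ : Cx) → Ope Γ Γ
  | .nil => .base
  | .snoc Γ _ => .keep (idOpe Γ)
  | .lock Γ => .keepLock (idOpe Γ)

/-- De Bruijn variables (no rule through locks). -/
inductive Var : Cx → Ty → Type
  | zero : Var (.snoc Γ A) A
  | succ : Var Γ A → Var (.snoc Γ B) A

/-- Intrinsically-typed terms of IKC^Nat: IKC extended with natural number
literals lift(k) and a binary multiplication. -/
inductive Tm : Cx → Ty → Type
  | var : Var Γ A → Tm Γ A
  | lam : Tm (.snoc Γ A) B → Tm Γ (.arr A B)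
  | app : Tm Γ (.arr A B) → Tm Γ A → Tm Γ B
  | box : Tm (.lock Γ) A → Tm Γ (.box A)
  | unbox : Tm Δ (.box A) → Ext Δ Γ → Tm Γ A
  | lift : Nat → Tm Γ .nat
  | mul : Tm Γ .nat → Tm Γ .nat → Tm Γ .nat

/-- Factorization of e : Δ ◁ Γ along an OPE o : Γ ≤ Γ'. -/
def factor : {Δ Γ Γ' : Cx} → Ext Δ Γ → Ope Γ Γ' → (Δ' : Cx) × Ope Δ Δ' × Ext Δ' Γ'
  | _, _, _, e, .drop o =>
    let f := factor e o
    ⟨f.1, f.2.1, .var f.2.2⟩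
  | _, _, _, .nil, .keepLock o => ⟨_, o, .nil⟩
  | _, _, _, .var e, .keep o =>
    let f := factor e o
    ⟨f.1, f.2.1, .var f.2.2⟩

/-- An accessibility proof e : Δ ◁ Γ yields an OPE Δ,🔒 ≤ Γ. -/
def factorOpe : {Δ Γ : Cx} → Ext Δ Γ → Ope (.lock Δ) Γ
  | _, _, .nil => idOpe _
  | _, _, .var e => .drop (factorOpe e)

/-- Weakening of variables along an OPE. -/
def wkVar : {Γ Γ' : Cx} → Ope Γ Γ' → Var Γ A → Var Γ' A
  | _, _, .drop o, v => .succ (wkVar o v)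
  | _, _, .keep _, .zero => .zero
  | _, _, .keep o, .succ v => .succ (wkVar o v)

/-- Weakening (renaming) of terms along an OPE. -/
def wkTm : {Γ Γ' : Cx} → Ope Γ Γ' → Tm Γ A → Tm Γ' A
  | _, _, o, .var v => .var (wkVar o v)
  | _, _, o, .lam t => .lam (wkTm (.keep o) t)
  | _, _, o, .app t u => .app (wkTm o t) (wkTm o u)
  | _, _, o, .box t => .box (wkTm (.keepLock o) t)
  | _, _, o, .unbox t e => .unbox (wkTm (factor e o).2.1 t) (factor e o).2.2
  | _, _, _, .lift k => .lift k
  | _, _, o, .mul t u => .mul (wkTm o t) (wkTm o u)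

/-- Substitutions Γ ⊢ˢ s : Δ. -/
inductive Sub : Cx → Cx → Type
  | empty : Sub Γ .nil
  | snoc : Sub Γ Δ → Tm Γ A → Sub Γ (.snoc Δ A)
  | lock : Sub Θ Δ → Ext Θ Γ → Sub Γ (.lock Δ)

/-- Weakening of substitutions along an OPE. -/
def wkSub : {Γ Γ' Δ : Cx} → Ope Γ Γ' → Sub Γ Δ → Sub Γ' Δ
  | _, _, _, _, .empty => .empty
  | _, _, _, o, .snoc s t => .snoc (wkSub o s) (wkTm o t)
  | _, _, _, o, .lock s e => .lock (wkSub (factor e o).2.1 s) (factor e o).2.2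

/-- Identity substitution. -/
def idSub : (Γ : Cx) → Sub Γ Γ
  | .nil => .empty
  | .snoc Γ _ => .snoc (wkSub (.drop (idOpe Γ)) (idSub Γ)) (.var .zero)
  | .lock Γ => .lock (idSub Γ) .nil

/-- Action of a substitution on a variable. -/
def substVar : {Γ Δ : Cx} → Sub Γ Δ → Var Δ A → Tm Γ A
  | _, _, .snoc _ t, .zero => t
  | _, _, .snoc s _, .succ v => substVar s v

/-- Trimming a substitution along the modal accessibility relation. -/
def trimSub : {Γ Δ Θ : Cx} → Sub Γ Δ → Ext Θ Δ → (Θ' : Cx) × Sub Θ' Θ × Ext Θ' Γ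
  | _, _, _, .lock s e, .nil => ⟨_, s, e⟩
  | _, _, _, .snoc s _, .var e => trimSub s e

/-- Application of a substitution to a term. -/
def subst : {Γ Δ : Cx} → Sub Γ Δ → Tm Δ A → Tm Γ A
  | _, _, s, .var v => substVar s v
  | _, _, s, .lam t => .lam (subst (.snoc (wkSub (.drop (idOpe _)) s) (.var .zero)) t)
  | _, _, s, .app t u => .app (subst s t) (subst s u)
  | _, _, s, .box t => .box (subst (.lock s .nil) t)
  | _, _, s, .unbox t e => .unbox (subst (trimSub s e).2.1 t) (trimSub s e).2.2
  | _, _, _, .lift k => .lift k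
  | _, _, s, .mul t u => .mul (subst s t) (subst s u)

/-- The equational theory ≈ of IKC^Nat: the rules of IKC together with
arithmetic rules making multiplication with the literals a commutative monoid
with absorbing zero computing on literals. -/
inductive Conv : {Γ : Cx} → {A : Ty} → Tm Γ A → Tm Γ A → Prop
  | refl (t : Tm Γ A) : Conv t t
  | symm : Conv t u → Conv u t
  | trans : Conv t u → Conv u v → Conv t v
  | congLam : Conv t t' → Conv (.lam t) (.lam t')
  | congApp : Conv t t' → Conv u u' → Conv (.app t u) (.app t' u')
  | congBox : Conv t t' → Conv (.box t) (.box t')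
  | congUnbox {t t' : Tm Δ (.box A)} {e : Ext Δ Γ} :
      Conv t t' → Conv (.unbox t e) (.unbox t' e)
  | congMul : Conv t t' → Conv u u' → Conv (.mul t u) (.mul t' u')
  | betaFun (t : Tm (.snoc Γ A) B) (u : Tm Γ A) :
      Conv (.app (.lam t) u) (subst (.snoc (idSub Γ) u) t)
  | etaFun (t : Tm Γ (.arr A B)) :
      Conv t (.lam (.app (wkTm (.drop (idOpe Γ)) t) (.var .zero)))
  | betaBox (t : Tm (.lock Δ) A) (e : Ext Δ Γ) :
      Conv (.unbox (.box t) e) (wkTm (factorOpe e) t)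
  | etaBox (t : Tm Γ (.box A)) :
      Conv t (.box (.unbox t .nil))
  | liftMul {Γ : Cx} (k₁ k₂ : Nat) :
      Conv (Γ := Γ) (.mul (.lift k₁) (.lift k₂)) (.lift (k₁ * k₂))
  | zeroMul (t : Tm Γ .nat) : Conv (.mul (.lift 0) t) (.lift 0)
  | oneMul (t : Tm Γ .nat) : Conv t (.mul (.lift 1) t)
  | mulLiftComm (t : Tm Γ .nat) (k : Nat) : Conv (.mul t (.lift k)) (.mul (.lift k) t)
  | mulAssoc (t u v : Tm Γ .nat) : Conv (.mul (.mul t u) v) (.mul t (.mul u v))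
  | mulComm (t u : Tm Γ .nat) : Conv (.mul t u) (.mul u t)

/-!
Binding-time correctness follows from a logical relation `Indist` that relates any two terms of
type `Nat` but only convertible terms of a type `□A`. By its fundamental lemma a closed
`f : Nat ⟶ □Nat` is related to itself, so `f u₁` and `f u₂` are related at `□Nat`, i.e.
convertible. The `box` case of the fundamental lemma asks for convertibility of the bodies under
substitutions that are related only by `Indist`; this holds because behind the lock the
substituted terms are reached only through `unbox`, that is at a `□` type, where `Indist`
already means convertibility.
-/

/-! ### Renaming and substitution -/

def compOpe : {Γ Γ' Γ'' : Cx} → Ope Γ' Γ'' → Ope Γ Γ' → Ope Γ Γ''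
  | _, _, _, .base, .base => .base
  | _, _, _, .drop o, o' => .drop (compOpe o o')
  | _, _, _, .keep o, .drop o' => .drop (compOpe o o')
  | _, _, _, .keep o, .keep o' => .keep (compOpe o o')
  | _, _, _, .keepLock o, .keepLock o' => .keepLock (compOpe o o')

@[simp]
theorem idOpe_compOpe : ∀ {Γ Γ' : Cx} (o : Ope Γ Γ'), compOpe (idOpe Γ') o = o
  | _, _, .base => rfl
  | _, _, .drop o => by simp [idOpe, compOpe, idOpe_compOpe o]
  | _, _, .keep o => by simp [idOpe, compOpe, idOpe_compOpe o]
  | _, _, .keepLock o => by simp [idOpe, compOpe, idOpe_compOpe o]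

@[simp]
theorem compOpe_idOpe : ∀ {Γ Γ' : Cx} (o : Ope Γ Γ'), compOpe o (idOpe Γ) = o
  | _, _, .base => rfl
  | _, _, .drop o => by simp [compOpe, compOpe_idOpe o]
  | _, _, .keep o => by simp [idOpe, compOpe, compOpe_idOpe o]
  | _, _, .keepLock o => by simp [idOpe, compOpe, compOpe_idOpe o]

@[simp]
theorem wkVar_idOpe : ∀ {Γ : Cx} {A : Ty} (v : Var Γ A), wkVar (idOpe Γ) v = v
  | _, _, .zero => rfl
  | _, _, .succ v => by simp [idOpe, wkVar, wkVar_idOpe v]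

theorem wkVar_compOpe : ∀ {Γ Γ' Γ'' : Cx} {A : Ty} (o' : Ope Γ' Γ'') (o : Ope Γ Γ')
    (v : Var Γ A), wkVar (compOpe o' o) v = wkVar o' (wkVar o v)
  | _, _, _, _, .drop o', o, v => by simp [compOpe, wkVar, wkVar_compOpe o' o v]
  | _, _, _, _, .keep o', .drop o, v => by simp [compOpe, wkVar, wkVar_compOpe o' o v]
  | _, _, _, _, .keep _, .keep _, .zero => rfl
  | _, _, _, _, .keep o', .keep o, .succ v => by simp [compOpe, wkVar, wkVar_compOpe o' o v]
  | _, _, _, _, .keepLock _, .keepLock _, v => nomatch v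
  | _, _, _, _, .base, .base, v => nomatch v

theorem factor_drop {Δ Γ Γ' : Cx} {A : Ty} (e : Ext Δ Γ) (o : Ope Γ Γ') :
    factor e (.drop (A := A) o) = ⟨_, (factor e o).2.1, .var (factor e o).2.2⟩ := by
  cases e <;> rfl

theorem factor_keep {Δ Γ Γ' : Cx} {A : Ty} (e : Ext Δ Γ) (o : Ope Γ Γ') :
    factor (.var (A := A) e) (.keep o) = ⟨_, (factor e o).2.1, .var (factor e o).2.2⟩ := rfl

theorem factor_keepLock {Γ Γ' : Cx} (o : Ope Γ Γ') : factor .nil (.keepLock o) = ⟨Γ', o, .nil⟩ :=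
  rfl

theorem factor_idOpe : ∀ {Δ Γ : Cx} (e : Ext Δ Γ), factor e (idOpe Γ) = ⟨Δ, idOpe Δ, e⟩
  | _, _, .nil => rfl
  | _, _, .var e => by rw [idOpe, factor_keep, factor_idOpe e]

theorem factor_compOpe : ∀ {Δ Γ Γ' Γ'' : Cx} (e : Ext Δ Γ) (o : Ope Γ Γ') (o' : Ope Γ' Γ''),
    factor e (compOpe o' o) =
      ⟨(factor (factor e o).2.2 o').1,
        compOpe (factor (factor e o).2.2 o').2.1 (factor e o).2.1,
        (factor (factor e o).2.2 o').2.2⟩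
  | _, _, _, _, e, o, .drop o' => by
      rw [compOpe, factor_drop, factor_compOpe e o o', factor_drop]
  | _, _, _, _, e, .drop o, .keep o' => by
      rw [compOpe, factor_drop, factor_compOpe e o o', factor_drop]
      rfl
  | _, _, _, _, .var e, .keep o, .keep o' => by
      rw [compOpe, factor_keep, factor_compOpe e o o', factor_keep, factor_keep]
  | _, _, _, _, .nil, .keepLock _, .keepLock _ => rfl
  | _, _, _, _, e, .base, .base => nomatch e

theorem factorOpe_factor : ∀ {Δ Γ Γ' : Cx} (e : Ext Δ Γ) (o : Ope Γ Γ'),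
    compOpe (factorOpe (factor e o).2.2) (.keepLock (factor e o).2.1) =
      compOpe o (factorOpe e)
  | _, _, _, e, .drop o => by
      rw [factor_drop]
      simp only [factorOpe, compOpe, factorOpe_factor e o]
  | _, _, _, .var e, .keep o => by
      rw [factor_keep]
      simp only [factorOpe, compOpe, factorOpe_factor e o]
  | _, _, _, .nil, .keepLock o => by
      simp [factor_keepLock, factorOpe, idOpe, compOpe]

theorem factor_nil_factorOpe : ∀ {Δ Γ : Cx} (e : Ext Δ Γ),
    factor .nil (factorOpe e) = ⟨Δ, idOpe Δ, e⟩
  | _, _, .nil => rfl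
  | _, _, .var e => by rw [factorOpe, factor_drop, factor_nil_factorOpe e]

@[simp]
theorem wkTm_idOpe : ∀ {Γ : Cx} {A : Ty} (t : Tm Γ A), wkTm (idOpe Γ) t = t
  | _, _, .var v => by simp [wkTm]
  | _, _, .lam t => by simpa [wkTm, idOpe] using wkTm_idOpe t
  | _, _, .app t u => by simp [wkTm, wkTm_idOpe t, wkTm_idOpe u]
  | _, _, .box t => by simpa [wkTm, idOpe] using wkTm_idOpe t
  | _, _, .unbox t e => by rw [wkTm, factor_idOpe e, wkTm_idOpe t]
  | _, _, .lift k => rfl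
  | _, _, .mul t u => by simp [wkTm, wkTm_idOpe t, wkTm_idOpe u]

theorem wkTm_compOpe : ∀ {Γ Γ' Γ'' : Cx} {A : Ty} (o' : Ope Γ' Γ'') (o : Ope Γ Γ')
    (t : Tm Γ A), wkTm (compOpe o' o) t = wkTm o' (wkTm o t)
  | _, _, _, _, o', o, .var v => by simp [wkTm, wkVar_compOpe]
  | _, _, _, _, o', o, .lam t => by
      simpa [wkTm, compOpe] using wkTm_compOpe (.keep o') (.keep o) t
  | _, _, _, _, o', o, .app t u => by simp [wkTm, wkTm_compOpe o' o t, wkTm_compOpe o' o u]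
  | _, _, _, _, o', o, .box t => by
      simpa [wkTm, compOpe] using wkTm_compOpe (.keepLock o') (.keepLock o) t
  | _, _, _, _, o', o, .unbox t e => by
      rw [wkTm, wkTm, wkTm, factor_compOpe, wkTm_compOpe]
  | _, _, _, _, _, _, .lift _ => rfl
  | _, _, _, _, o', o, .mul t u => by simp [wkTm, wkTm_compOpe o' o t, wkTm_compOpe o' o u]

@[simp]
theorem wkSub_idOpe : ∀ {Γ Δ : Cx} (s : Sub Γ Δ), wkSub (idOpe Γ) s = s
  | _, _, .empty => rfl
  | _, _, .snoc s t => by simp [wkSub, wkSub_idOpe s]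
  | _, _, .lock s e => by rw [wkSub, factor_idOpe e, wkSub_idOpe s]

theorem wkSub_compOpe : ∀ {Γ Γ' Γ'' Δ : Cx} (o' : Ope Γ' Γ'') (o : Ope Γ Γ') (s : Sub Γ Δ),
    wkSub (compOpe o' o) s = wkSub o' (wkSub o s)
  | _, _, _, _, _, _, .empty => rfl
  | _, _, _, _, o', o, .snoc s t => by simp [wkSub, wkSub_compOpe o' o s, wkTm_compOpe]
  | _, _, _, _, o', o, .lock s e => by
      rw [wkSub, wkSub, wkSub, factor_compOpe, wkSub_compOpe]

theorem substVar_wkSub : ∀ {Γ Γ' Δ : Cx} {A : Ty} (o : Ope Γ Γ') (s : Sub Γ Δ) (v : Var Δ A),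
    substVar (wkSub o s) v = wkTm o (substVar s v)
  | _, _, _, _, _, .snoc _ _, .zero => rfl
  | _, _, _, _, o, .snoc s _, .succ v => substVar_wkSub o s v

theorem trimSub_wkSub : ∀ {Γ Γ' Δ Θ : Cx} (o : Ope Γ Γ') (s : Sub Γ Δ) (e : Ext Θ Δ),
    trimSub (wkSub o s) e =
      ⟨_, wkSub (factor (trimSub s e).2.2 o).2.1 (trimSub s e).2.1,
        (factor (trimSub s e).2.2 o).2.2⟩
  | _, _, _, _, _, .lock _ _, .nil => rfl
  | _, _, _, _, o, .snoc s _, .var e => trimSub_wkSub o s e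

theorem subst_wkSub : ∀ {Γ Γ' Δ : Cx} {A : Ty} (o : Ope Γ Γ') (s : Sub Γ Δ) (t : Tm Δ A),
    subst (wkSub o s) t = wkTm o (subst s t)
  | _, _, _, _, o, s, .var v => substVar_wkSub o s v
  | _, _, _, _, o, s, .lam t => by
      simp only [subst, wkTm]
      rw [← subst_wkSub]
      simp only [wkSub, wkTm, wkVar, ← wkSub_compOpe, compOpe, idOpe_compOpe, compOpe_idOpe]
  | _, _, _, _, o, s, .app t u => by simp [subst, wkTm, subst_wkSub o s t, subst_wkSub o s u]
  | _, _, _, _, o, s, .box t => by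
      simp only [subst, wkTm]
      rw [← subst_wkSub]
      rfl
  | _, _, _, _, o, s, .unbox t e => by
      simp only [subst, wkTm]
      rw [trimSub_wkSub, subst_wkSub]
  | _, _, _, _, _, _, .lift _ => rfl
  | _, _, _, _, o, s, .mul t u => by simp [subst, wkTm, subst_wkSub o s t, subst_wkSub o s u]

def restrictSub : {Δ Δ' Γ : Cx} → Ope Δ Δ' → Sub Γ Δ' → Sub Γ Δ
  | _, _, _, .base, .empty => .empty
  | _, _, _, .drop o, .snoc s _ => restrictSub o s
  | _, _, _, .keep o, .snoc s t => .snoc (restrictSub o s) t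
  | _, _, _, .keepLock o, .lock s e => .lock (restrictSub o s) e

@[simp]
theorem restrictSub_idOpe : ∀ {Δ Γ : Cx} (s : Sub Γ Δ), restrictSub (idOpe Δ) s = s
  | _, _, .empty => rfl
  | _, _, .snoc s t => by simp [idOpe, restrictSub, restrictSub_idOpe s]
  | _, _, .lock s e => by simp [idOpe, restrictSub, restrictSub_idOpe s]

theorem substVar_restrictSub : ∀ {Δ Δ' Γ : Cx} {A : Ty} (o : Ope Δ Δ') (s : Sub Γ Δ')
    (v : Var Δ A), substVar (restrictSub o s) v = substVar s (wkVar o v)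
  | _, _, _, _, .drop o, .snoc s _, v => substVar_restrictSub o s v
  | _, _, _, _, .keep _, .snoc _ _, .zero => rfl
  | _, _, _, _, .keep o, .snoc s _, .succ v => substVar_restrictSub o s v

theorem trimSub_restrictSub : ∀ {Δ Δ' Γ Θ : Cx} (o : Ope Δ Δ') (s : Sub Γ Δ') (e : Ext Θ Δ),
    trimSub (restrictSub o s) e =
      ⟨_, restrictSub (factor e o).2.1 (trimSub s (factor e o).2.2).2.1,
        (trimSub s (factor e o).2.2).2.2⟩
  | _, _, _, _, .drop o, .snoc s _, e => by
      rw [factor_drop, restrictSub, trimSub_restrictSub o s e]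
      rfl
  | _, _, _, _, .keep o, .snoc s _, .var e => trimSub_restrictSub o s e
  | _, _, _, _, .keepLock _, .lock _ _, .nil => rfl

theorem restrictSub_wkSub : ∀ {Δ Δ' Γ Γ' : Cx} (o : Ope Δ Δ') (o' : Ope Γ Γ') (s : Sub Γ Δ'),
    restrictSub o (wkSub o' s) = wkSub o' (restrictSub o s)
  | _, _, _, _, .base, _, .empty => rfl
  | _, _, _, _, .drop o, o', .snoc s _ => restrictSub_wkSub o o' s
  | _, _, _, _, .keep o, o', .snoc s _ => by simp [wkSub, restrictSub, restrictSub_wkSub o o' s]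
  | _, _, _, _, .keepLock o, _, .lock s e => by simp [wkSub, restrictSub, restrictSub_wkSub o _ s]

theorem subst_wkTm : ∀ {Δ Δ' Γ : Cx} {A : Ty} (o : Ope Δ Δ') (s : Sub Γ Δ') (t : Tm Δ A),
    subst s (wkTm o t) = subst (restrictSub o s) t
  | _, _, _, _, o, s, .var v => (substVar_restrictSub o s v).symm
  | _, _, _, _, o, s, .lam t => by
      rw [wkTm, subst, subst, subst_wkTm]
      simp only [restrictSub, restrictSub_wkSub]
  | _, _, _, _, o, s, .app t u => by simp [wkTm, subst, subst_wkTm o s t, subst_wkTm o s u]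
  | _, _, _, _, o, s, .box t => by
      rw [wkTm, subst, subst, subst_wkTm]
      rfl
  | _, _, _, _, o, s, .unbox t e => by
      rw [wkTm, subst, subst, trimSub_restrictSub, subst_wkTm]
  | _, _, _, _, _, _, .lift _ => rfl
  | _, _, _, _, o, s, .mul t u => by simp [wkTm, subst, subst_wkTm o s t, subst_wkTm o s u]

def compSub : {Γ Δ Θ : Cx} → Sub Γ Δ → Sub Δ Θ → Sub Γ Θ
  | _, _, _, _, .empty => .empty
  | _, _, _, σ, .snoc s t => .snoc (compSub σ s) (subst σ t)
  | _, _, _, σ, .lock s e => .lock (compSub (trimSub σ e).2.1 s) (trimSub σ e).2.2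

theorem substVar_compSub : ∀ {Γ Δ Θ : Cx} {A : Ty} (σ : Sub Γ Δ) (s : Sub Δ Θ)
    (v : Var Θ A), substVar (compSub σ s) v = subst σ (substVar s v)
  | _, _, _, _, _, .snoc _ _, .zero => rfl
  | _, _, _, _, σ, .snoc s _, .succ v => substVar_compSub σ s v

theorem trimSub_compSub : ∀ {Γ Δ Θ Θ' : Cx} (σ : Sub Γ Δ) (s : Sub Δ Θ) (e : Ext Θ' Θ),
    trimSub (compSub σ s) e =
      ⟨_, compSub (trimSub σ (trimSub s e).2.2).2.1 (trimSub s e).2.1,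
        (trimSub σ (trimSub s e).2.2).2.2⟩
  | _, _, _, _, _, .lock _ _, .nil => rfl
  | _, _, _, _, σ, .snoc s _, .var e => trimSub_compSub σ s e

theorem wkSub_compSub : ∀ {Γ Γ' Δ Θ : Cx} (o : Ope Γ Γ') (σ : Sub Γ Δ) (s : Sub Δ Θ),
    compSub (wkSub o σ) s = wkSub o (compSub σ s)
  | _, _, _, _, _, _, .empty => rfl
  | _, _, _, _, o, σ, .snoc s t => by simp [compSub, wkSub, wkSub_compSub o σ s, subst_wkSub]
  | _, _, _, _, o, σ, .lock s e => by
      rw [compSub, compSub, wkSub, trimSub_wkSub, wkSub_compSub]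

theorem compSub_wkSub : ∀ {Γ Δ Θ Θ' : Cx} (σ : Sub Γ Δ) (o : Ope Θ' Δ) (s : Sub Θ' Θ),
    compSub σ (wkSub o s) = compSub (restrictSub o σ) s
  | _, _, _, _, _, _, .empty => rfl
  | _, _, _, _, σ, o, .snoc s t => by simp [compSub, wkSub, compSub_wkSub σ o s, subst_wkTm]
  | _, _, _, _, σ, o, .lock s e => by
      rw [wkSub, compSub, compSub, trimSub_restrictSub, compSub_wkSub]

theorem subst_compSub : ∀ {Γ Δ Θ : Cx} {A : Ty} (σ : Sub Γ Δ) (s : Sub Δ Θ) (t : Tm Θ A),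
    subst (compSub σ s) t = subst σ (subst s t)
  | _, _, _, _, σ, s, .var v => substVar_compSub σ s v
  | _, _, _, _, σ, s, .lam t => by
      rw [subst, subst, subst, ← subst_compSub]
      simp only [compSub, subst, substVar, compSub_wkSub, restrictSub, restrictSub_idOpe,
        wkSub_compSub]
  | _, _, _, _, σ, s, .app t u => by simp [subst, subst_compSub σ s t, subst_compSub σ s u]
  | _, _, _, _, σ, s, .box t => by
      rw [subst, subst, subst, ← subst_compSub]
      rfl
  | _, _, _, _, σ, s, .unbox t e => by
      rw [subst, subst, subst, trimSub_compSub, subst_compSub]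
  | _, _, _, _, _, _, .lift _ => rfl
  | _, _, _, _, σ, s, .mul t u => by simp [subst, subst_compSub σ s t, subst_compSub σ s u]

theorem substVar_idSub : ∀ {Γ : Cx} {A : Ty} (v : Var Γ A), substVar (idSub Γ) v = .var v
  | _, _, .zero => rfl
  | _, _, .succ v => by
      rw [idSub, substVar, substVar_wkSub, substVar_idSub v]
      simp [wkTm, wkVar]

theorem trimSub_idSub : ∀ {Γ Δ : Cx} (e : Ext Δ Γ), trimSub (idSub Γ) e = ⟨Δ, idSub Δ, e⟩
  | _, _, .nil => rfl
  | _, _, .var e => by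
      rw [idSub, trimSub, trimSub_wkSub, trimSub_idSub e, factor_drop, factor_idOpe]
      simp

@[simp]
theorem subst_idSub : ∀ {Γ : Cx} {A : Ty} (t : Tm Γ A), subst (idSub Γ) t = t
  | _, _, .var v => substVar_idSub v
  | _, _, .lam t => by rw [subst, ← idSub, subst_idSub t]
  | _, _, .app t u => by simp [subst, subst_idSub t, subst_idSub u]
  | _, _, .box t => by rw [subst, ← idSub, subst_idSub t]
  | _, _, .unbox t e => by rw [subst, trimSub_idSub e, subst_idSub t]
  | _, _, .lift _ => rfl
  | _, _, .mul t u => by simp [subst, subst_idSub t, subst_idSub u]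

@[simp]
theorem idSub_compSub : ∀ {Γ Δ : Cx} (s : Sub Γ Δ), compSub (idSub Γ) s = s
  | _, _, .empty => rfl
  | _, _, .snoc s t => by simp [compSub, idSub_compSub s]
  | _, _, .lock s e => by rw [compSub, trimSub_idSub e, idSub_compSub s]

@[simp]
theorem compSub_idSub : ∀ {Γ Δ : Cx} (s : Sub Γ Δ), compSub s (idSub Δ) = s
  | _, _, .empty => rfl
  | _, _, .snoc s t => by
      simp only [idSub, compSub, subst, substVar, compSub_wkSub, restrictSub, restrictSub_idOpe,
        compSub_idSub s]
  | _, _, .lock s e => by rw [idSub, compSub, trimSub, compSub_idSub s]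

theorem restrictSub_idSub_compSub : ∀ {Γ Γ' Δ : Cx} (o : Ope Γ Γ') (ρ : Sub Γ Δ),
    compSub (restrictSub o (idSub Γ')) ρ = wkSub o ρ
  | _, _, _, _, .empty => rfl
  | _, _, _, o, .snoc ρ t => by
      simp [compSub, wkSub, restrictSub_idSub_compSub o ρ, ← subst_wkTm]
  | _, _, _, o, .lock ρ e => by
      rw [compSub, wkSub, trimSub_restrictSub, trimSub_idSub, restrictSub_idSub_compSub]

theorem wkSub_idSub {Γ Γ' : Cx} (o : Ope Γ Γ') : wkSub o (idSub Γ) = restrictSub o (idSub Γ') := by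
  rw [← restrictSub_idSub_compSub o (idSub Γ), compSub_idSub]

theorem subst_snoc_idSub_wkTm {Γ Γ' : Cx} {A B : Ty} (o : Ope Γ Γ') (t : Tm (.snoc Γ A) B)
    (u : Tm Γ A) : subst (.snoc (idSub Γ') (wkTm o u)) (wkTm (.keep o) t) =
      wkTm o (subst (.snoc (idSub Γ) u) t) := by
  rw [subst_wkTm, ← subst_wkSub, restrictSub, wkSub, wkSub_idSub]

theorem Conv.wkTm {Γ : Cx} {A : Ty} {t u : Tm Γ A} (h : Conv t u) :
    ∀ {Γ' : Cx} (o : Ope Γ Γ'), Conv (IKC.wkTm o t) (IKC.wkTm o u) := by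
  induction h with
  | refl => exact fun _ => .refl _
  | symm _ ih => exact fun o => (ih o).symm
  | trans _ _ ih₁ ih₂ => exact fun o => (ih₁ o).trans (ih₂ o)
  | congLam _ ih => exact fun _ => .congLam (ih _)
  | congApp _ _ ih₁ ih₂ => exact fun o => .congApp (ih₁ o) (ih₂ o)
  | congBox _ ih => exact fun _ => .congBox (ih _)
  | congUnbox _ ih => exact fun _ => .congUnbox (ih _)
  | congMul _ _ ih₁ ih₂ => exact fun o => .congMul (ih₁ o) (ih₂ o)
  | betaFun =>
      intro _ o
      rw [← subst_snoc_idSub_wkTm]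
      exact .betaFun _ _
  | etaFun t =>
      intro _ o
      have h := Conv.etaFun (IKC.wkTm o t)
      rw [← wkTm_compOpe, compOpe, idOpe_compOpe] at h
      simpa [IKC.wkTm, ← wkTm_compOpe, compOpe, wkVar] using h
  | betaBox t e =>
      intro _ o
      have h := Conv.betaBox (IKC.wkTm (.keepLock (factor e o).2.1) t) (factor e o).2.2
      rwa [← wkTm_compOpe, factorOpe_factor, wkTm_compOpe] at h
  | etaBox => exact fun _ => .etaBox _
  | liftMul k₁ k₂ => exact fun _ => .liftMul k₁ k₂
  | zeroMul => exact fun _ => .zeroMul _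
  | oneMul => exact fun _ => .oneMul _
  | mulLiftComm _ k => exact fun _ => .mulLiftComm _ k
  | mulAssoc => exact fun _ => .mulAssoc _ _ _
  | mulComm => exact fun _ => .mulComm _ _

/-! ### The logical relation -/

/-- Any two terms of type `Nat` are related, while related terms of a `□` type must be
convertible. No Kripke quantification over weakenings is needed at `⟶`, because the clause for
`□` already quantifies over `◁`. -/
def Indist : (A : Ty) → (Γ : Cx) → Tm Γ A → Tm Γ A → Prop
  | .base, _, t, t' => Conv t t'
  | .nat, _, _, _ => True
  | .arr A B, Γ, t, t' =>
      ∀ ⦃u u' : Tm Γ A⦄, Indist A Γ u u' → Indist B Γ (.app t u) (.app t' u')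
  | .box A, Γ, t, t' =>
      Conv t t' ∧ ∀ ⦃Γ' : Cx⦄ (e : Ext Γ Γ'), Indist A Γ' (.unbox t e) (.unbox t' e)

theorem Indist.of_conv : ∀ {A : Ty} {Γ : Cx} {t t' s s' : Tm Γ A},
    Conv t s → Conv t' s' → Indist A Γ t t' → Indist A Γ s s'
  | .base, _, _, _, _, _, hs, hs', h => (hs.symm.trans h).trans hs'
  | .nat, _, _, _, _, _, _, _, _ => trivial
  | .arr _ _, _, _, _, _, _, hs, hs', h => fun _ _ hu =>
      (h hu).of_conv (.congApp hs (.refl _)) (.congApp hs' (.refl _))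
  | .box _, _, _, _, _, _, hs, hs', h =>
      ⟨(hs.symm.trans h.1).trans hs', fun _ e => (h.2 e).of_conv (.congUnbox hs) (.congUnbox hs')⟩

inductive IndistSub : {Γ Δ : Cx} → Sub Γ Δ → Sub Γ Δ → Prop
  | empty {Γ : Cx} : IndistSub (Γ := Γ) .empty .empty
  | snoc {Γ Δ : Cx} {A : Ty} {s s' : Sub Γ Δ} {t t' : Tm Γ A} :
      IndistSub s s' → Indist A Γ t t' → IndistSub (.snoc s t) (.snoc s' t')
  | lock {Γ Δ Θ : Cx} {s s' : Sub Θ Δ} {e : Ext Θ Γ} :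
      IndistSub s s' → IndistSub (.lock s e) (.lock s' e)

/-- Convertible on the variables after the last lock, and only `Indist`-related (or again
`ConvSub`-related) behind it. -/
inductive ConvSub : {Γ Δ : Cx} → Sub Γ Δ → Sub Γ Δ → Prop
  | empty {Γ : Cx} : ConvSub (Γ := Γ) .empty .empty
  | snoc {Γ Δ : Cx} {A : Ty} {s s' : Sub Γ Δ} {t t' : Tm Γ A} :
      ConvSub s s' → Conv t t' → ConvSub (.snoc s t) (.snoc s' t')
  | lockIndist {Γ Δ Θ : Cx} {s s' : Sub Θ Δ} {e : Ext Θ Γ} :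
      IndistSub s s' → ConvSub (.lock s e) (.lock s' e)
  | lockConv {Γ Δ Θ : Cx} {s s' : Sub Θ Δ} {e : Ext Θ Γ} :
      ConvSub s s' → ConvSub (.lock s e) (.lock s' e)

theorem IndistSub.substVar {Γ Δ : Cx} {ρ ρ' : Sub Γ Δ} (h : IndistSub ρ ρ') {A : Ty}
    (v : Var Δ A) : Indist A Γ (IKC.substVar ρ v) (IKC.substVar ρ' v) := by
  induction h with
  | empty => cases v
  | snoc _ ht ih => cases v with
    | zero => exact ht
    | succ v => exact ih v
  | lock => cases v

theorem ConvSub.substVar {Γ Δ : Cx} {σ σ' : Sub Γ Δ} (h : ConvSub σ σ') {A : Ty}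
    (v : Var Δ A) : Conv (IKC.substVar σ v) (IKC.substVar σ' v) := by
  induction h with
  | empty => cases v
  | snoc _ ht ih => cases v with
    | zero => exact ht
    | succ v => exact ih v
  | lockIndist | lockConv => cases v

theorem IndistSub.trimSub {Γ Δ Θ : Cx} {ρ ρ' : Sub Γ Δ} (h : IndistSub ρ ρ') (e : Ext Θ Δ) :
    ∃ (Θ' : Cx) (s s' : Sub Θ' Θ) (e' : Ext Θ' Γ), IndistSub s s' ∧
      IKC.trimSub ρ e = ⟨Θ', s, e'⟩ ∧ IKC.trimSub ρ' e = ⟨Θ', s', e'⟩ := by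
  induction h with
  | empty => cases e
  | snoc _ _ ih => cases e with
    | var e => exact ih e
  | lock hs => cases e with
    | nil => exact ⟨_, _, _, _, hs, rfl, rfl⟩

theorem ConvSub.trimSub {Γ Δ Θ : Cx} {σ σ' : Sub Γ Δ} (h : ConvSub σ σ') (e : Ext Θ Δ) :
    ∃ (Θ' : Cx) (s s' : Sub Θ' Θ) (e' : Ext Θ' Γ), (IndistSub s s' ∨ ConvSub s s') ∧
      IKC.trimSub σ e = ⟨Θ', s, e'⟩ ∧ IKC.trimSub σ' e = ⟨Θ', s', e'⟩ := by
  induction h with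
  | empty => cases e
  | snoc _ _ ih => cases e with
    | var e => exact ih e
  | lockIndist hs => cases e with
    | nil => exact ⟨_, _, _, _, .inl hs, rfl, rfl⟩
  | lockConv hs => cases e with
    | nil => exact ⟨_, _, _, _, .inr hs, rfl, rfl⟩

theorem wkSub_drop_idOpe_lock {Γ Γ' Δ : Cx} {A : Ty} (s : Sub Γ Δ) (e : Ext Γ Γ') :
    wkSub (.drop (A := A) (idOpe Γ')) (.lock s e) = .lock s (.var e) := by
  rw [wkSub, factor_drop, factor_idOpe, wkSub_idOpe]

theorem ConvSub.wkSub_drop {Γ Δ : Cx} {A : Ty} {σ σ' : Sub Γ Δ} (h : ConvSub σ σ') :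
    ConvSub (wkSub (.drop (A := A) (idOpe Γ)) σ) (wkSub (.drop (idOpe Γ)) σ') := by
  induction h with
  | empty => exact .empty
  | snoc _ ht ih => exact .snoc ih (ht.wkTm _)
  | lockIndist hs => rw [wkSub_drop_idOpe_lock, wkSub_drop_idOpe_lock]; exact .lockIndist hs
  | lockConv hs => rw [wkSub_drop_idOpe_lock, wkSub_drop_idOpe_lock]; exact .lockConv hs

theorem Conv.app_subst_lam {Γ Δ : Cx} {A B : Ty} (σ : Sub Γ Δ) (t : Tm (.snoc Δ A) B)
    (u : Tm Γ A) : Conv (.app (subst σ (.lam t)) u) (subst (.snoc σ u) t) := by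
  have h := Conv.betaFun (subst (.snoc (wkSub (.drop (idOpe Γ)) σ) (.var .zero)) t) u
  rwa [← subst_compSub, compSub, compSub_wkSub, restrictSub, restrictSub_idOpe, idSub_compSub] at h

theorem Conv.unbox_subst_box {Γ Γ' Δ : Cx} {A : Ty} (σ : Sub Γ Δ) (t : Tm (.lock Δ) A)
    (e : Ext Γ Γ') : Conv (.unbox (subst σ (.box t)) e) (subst (.lock σ e) t) := by
  have h := Conv.betaBox (subst (.lock σ .nil) t) e
  rwa [← subst_wkSub, wkSub, factor_nil_factorOpe, wkSub_idOpe] at h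

/-- The fundamental lemma of `Indist`, together with its counterpart for `ConvSub`: the `box` case
of the first needs the second, and the `unbox` case of the second needs the first. -/
theorem indist_subst_and_conv_subst : ∀ {Δ : Cx} {A : Ty} (t : Tm Δ A),
    (∀ {Γ : Cx} {ρ ρ' : Sub Γ Δ}, IndistSub ρ ρ' → Indist A Γ (subst ρ t) (subst ρ' t)) ∧
    (∀ {Γ : Cx} {σ σ' : Sub Γ Δ}, ConvSub σ σ' → Conv (subst σ t) (subst σ' t))
  | _, _, .var v => ⟨fun hρ => hρ.substVar v, fun hσ => hσ.substVar v⟩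
  | _, _, .lam t =>
      ⟨fun hρ _ _ hu => ((indist_subst_and_conv_subst t).1 (hρ.snoc hu)).of_conv
          (Conv.app_subst_lam _ t _).symm (Conv.app_subst_lam _ t _).symm,
        fun hσ => .congLam ((indist_subst_and_conv_subst t).2 (hσ.wkSub_drop.snoc (.refl _)))⟩
  | _, _, .app t u =>
      ⟨fun hρ => (indist_subst_and_conv_subst t).1 hρ ((indist_subst_and_conv_subst u).1 hρ),
        fun hσ => .congApp ((indist_subst_and_conv_subst t).2 hσ)
          ((indist_subst_and_conv_subst u).2 hσ)⟩
  | _, _, .box t =>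
      ⟨fun hρ => ⟨.congBox ((indist_subst_and_conv_subst t).2 (.lockIndist hρ)),
          fun _ e => ((indist_subst_and_conv_subst t).1 (hρ.lock (e := e))).of_conv
            (Conv.unbox_subst_box _ t e).symm (Conv.unbox_subst_box _ t e).symm⟩,
        fun hσ => .congBox ((indist_subst_and_conv_subst t).2 (.lockConv hσ))⟩
  | _, _, .unbox t e => by
      constructor
      · intro Γ ρ ρ' hρ
        obtain ⟨_, s, s', e', hs, hρe, hρ'e⟩ := hρ.trimSub e
        rw [subst, subst, hρe, hρ'e]
        exact ((indist_subst_and_conv_subst t).1 hs).2 e'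
      · intro Γ σ σ' hσ
        obtain ⟨_, s, s', e', hs | hs, hσe, hσ'e⟩ := hσ.trimSub e
        · rw [subst, subst, hσe, hσ'e]
          exact .congUnbox ((indist_subst_and_conv_subst t).1 hs).1
        · rw [subst, subst, hσe, hσ'e]
          exact .congUnbox ((indist_subst_and_conv_subst t).2 hs)
  | _, _, .lift _ => ⟨fun _ => trivial, fun _ => .refl _⟩
  | _, _, .mul t u =>
      ⟨fun _ => trivial, fun hσ => .congMul ((indist_subst_and_conv_subst t).2 hσ)
          ((indist_subst_and_conv_subst u).2 hσ)⟩

theorem Indist.refl_of_closed {A : Ty} (t : Tm .nil A) : Indist A .nil t t := by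
  simpa only [subst_idSub] using
    (indist_subst_and_conv_subst t).1 (ρ := idSub .nil) (ρ' := idSub .nil) .empty

/-- Binding-time correctness for IKC^Nat: every closed term
f : Nat ⟶ □Nat is constant up to ≈, i.e. app(f, u₁) ≈ app(f, u₂) for any two
closed arguments u₁, u₂ : Nat. -/
theorem binding_time_correctness (f : Tm .nil (.arr .nat (.box .nat)))
    (u₁ u₂ : Tm .nil .nat) : Conv (.app f u₁) (.app f u₂) :=
  (Indist.refl_of_closed f (u := u₁) (u' := u₂) trivial).1

end IKC
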